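/- Alternative contraction lemma (Karrenbauer): let δ ≤ 1/6, μ > 0, μ′ = (1 − δ/√n)μ, x, s > 0 componentwise, and suppose σ := (∑ᵢ(xᵢsᵢ/μ − 1)²)^{1/2} ≤ δ. If h, f satisfy xᵢfᵢ + sᵢhᵢ = μ′ − xᵢsᵢ for all i and hᵀf = 0, then σ′ := (∑ᵢ((xᵢ+hᵢ)(sᵢ+fᵢ)/μ′ − 1)²)^{1/2} ≤ δ. -/

import Mathlib

/-!
Write `μ' = (1 - δ/√n) μ`. The step equation gives `(x + h)(s + f) = μ' + h f`, so `σ'` is the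
ℓ² norm of `h f / μ'`, which is at most its ℓ¹ norm. Because `∑ h f = 0`, that ℓ¹ norm is twice
the sum of the positive parts of the `h f`, and AM-GM applied to the two summands of
`x f + s h = μ' - x s` gives `4 (x s)(h f) ≤ (x s - μ')²`. From `σ ≤ δ` we get `x s ≥ (1 - δ) μ`
and `∑ (x s - μ')² ≤ 4 δ² μ²`, hence `σ' ≤ 2 δ² / ((1 - δ)(1 - δ/√n)) ≤ δ` when `δ ≤ 1/6`.
-/

open Finset

section

variable {ι : Type*}

lemma Finset.sum_abs_eq_two_mul_sum_posPart (s : Finset ι) (a : ι → ℝ) (h : ∑ i ∈ s, a i = 0) :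
    ∑ i ∈ s, |a i| = 2 * ∑ i ∈ s, (a i)⁺ := by
  have key := sum_congr rfl fun i (_ : i ∈ s) => abs_add_eq_two_nsmul_posPart (a i)
  rw [sum_add_distrib, h, add_zero] at key
  simp only [key, nsmul_eq_mul, Nat.cast_ofNat, mul_sum]

lemma Real.sqrt_sum_sq_le_sum_abs (s : Finset ι) (a : ι → ℝ) :
    √(∑ i ∈ s, a i ^ 2) ≤ ∑ i ∈ s, |a i| := by
  rw [Real.sqrt_le_left (sum_nonneg fun i _ => abs_nonneg _)]
  simpa only [sq_abs] using sum_sq_le_sq_sum_of_nonneg fun i _ => abs_nonneg (a i)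

lemma Finset.abs_le_sqrt_sum_sq {s : Finset ι} {i : ι} (hi : i ∈ s) (a : ι → ℝ) :
    |a i| ≤ √(∑ j ∈ s, a j ^ 2) := by
  rw [← Real.sqrt_sq_eq_abs]
  exact Real.sqrt_le_sqrt (single_le_sum (fun j _ => sq_nonneg (a j)) hi)

lemma Finset.sum_sq_add_le (s : Finset ι) (v : ι → ℝ) (t : ℝ) :
    ∑ i ∈ s, (v i + t) ^ 2 ≤ 2 * ∑ i ∈ s, v i ^ 2 + 2 * (#s * t ^ 2) := by
  calc ∑ i ∈ s, (v i + t) ^ 2 ≤ ∑ i ∈ s, 2 * (v i ^ 2 + t ^ 2) := sum_le_sum fun i _ => add_sq_le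
    _ = 2 * ∑ i ∈ s, v i ^ 2 + 2 * (#s * t ^ 2) := by
      rw [← mul_sum, sum_add_distrib, sum_const, nsmul_eq_mul, mul_add]

end

namespace InteriorPoint

lemma four_mul_mul_mul_le_sq_add (x s h f : ℝ) :
    4 * (x * s) * (h * f) ≤ (x * f + s * h) ^ 2 := by
  calc 4 * (x * s) * (h * f) = 4 * (x * f) * (s * h) := by ring
    _ ≤ (x * f + s * h) ^ 2 := four_mul_le_sq_add _ _

lemma posPart_mul_le_sq_div {x s h f m : ℝ} (hm : 0 < m) (hxs : m ≤ x * s) :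
    (h * f)⁺ ≤ (x * f + s * h) ^ 2 / (4 * m) := by
  refine sup_le ?_ (by positivity)
  rw [le_div_iff₀ (by positivity)]
  rcases le_total (h * f) 0 with hneg | hpos
  · nlinarith [sq_nonneg (x * f + s * h)]
  · nlinarith [four_mul_mul_mul_le_sq_add x s h f]

variable {ι : Type*} [Fintype ι]

lemma sum_abs_mul_le {x s h f : ι → ℝ} {m c : ℝ} (hm : 0 < m) (hxs : ∀ i, m ≤ x i * s i)
    (hstep : ∀ i, x i * f i + s i * h i = c - x i * s i) (horth : ∑ i, h i * f i = 0) :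
    ∑ i, |h i * f i| ≤ (∑ i, (x i * s i - c) ^ 2) / (2 * m) := by
  calc ∑ i, |h i * f i| = 2 * ∑ i, (h i * f i)⁺ := sum_abs_eq_two_mul_sum_posPart _ _ horth
    _ ≤ 2 * ∑ i, (x i * s i - c) ^ 2 / (4 * m) := by
      gcongr with i
      calc (h i * f i)⁺ ≤ (x i * f i + s i * h i) ^ 2 / (4 * m) := posPart_mul_le_sq_div hm (hxs i)
        _ = (x i * s i - c) ^ 2 / (4 * m) := by rw [hstep i, ← neg_sub, neg_sq]
    _ = (∑ i, (x i * s i - c) ^ 2) / (2 * m) := by rw [← sum_div]; field_simp; ring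

lemma sum_sq_sub_le {w : ι → ℝ} {μ δ t : ℝ} (hμ : 0 < μ) (hcard : Fintype.card ι * t ^ 2 ≤ δ ^ 2)
    (hσ : ∑ i, (w i / μ - 1) ^ 2 ≤ δ ^ 2) :
    ∑ i, (w i - (1 - t) * μ) ^ 2 ≤ 4 * δ ^ 2 * μ ^ 2 := by
  have hscale : ∀ i, (w i - (1 - t) * μ) ^ 2 = μ ^ 2 * (w i / μ - 1 + t) ^ 2 := fun i => by
    field_simp; ring
  rw [sum_congr rfl fun i _ => hscale i, ← mul_sum]
  have := sum_sq_add_le univ (fun i => w i / μ - 1) t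
  rw [card_univ] at this
  nlinarith [sq_nonneg μ]

theorem contraction_of_step {x s h f : ι → ℝ} {μ δ t : ℝ} (hμ : 0 < μ) (hδ : δ ≤ 1 / 6)
    (htδ : t ≤ δ) (hcard : Fintype.card ι * t ^ 2 ≤ δ ^ 2)
    (hσ : √(∑ i, (x i * s i / μ - 1) ^ 2) ≤ δ)
    (hstep : ∀ i, x i * f i + s i * h i = (1 - t) * μ - x i * s i)
    (horth : ∑ i, h i * f i = 0) :
    √(∑ i, ((x i + h i) * (s i + f i) / ((1 - t) * μ) - 1) ^ 2) ≤ δ := by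
  have hδ0 : 0 ≤ δ := (Real.sqrt_nonneg _).trans hσ
  have hμ' : 0 < (1 - t) * μ := mul_pos (by linarith) hμ
  have hm : 0 < (1 - δ) * μ := mul_pos (by linarith) hμ
  have hlower : ∀ i, (1 - δ) * μ ≤ x i * s i := fun i => by
    have := (abs_le.mp ((abs_le_sqrt_sum_sq (mem_univ i) _).trans hσ)).1
    rw [le_sub_iff_add_le, le_div_iff₀ hμ] at this
    linarith
  have hl1 : ∑ i, |h i * f i| ≤ 4 * δ ^ 2 * μ ^ 2 / (2 * ((1 - δ) * μ)) :=
    (sum_abs_mul_le hm hlower hstep horth).trans <|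
      div_le_div_of_nonneg_right (sum_sq_sub_le hμ hcard ((Real.sqrt_le_left hδ0).mp hσ))
        (by positivity)
  have hterm : ∀ i, (x i + h i) * (s i + f i) / ((1 - t) * μ) - 1 = h i * f i / ((1 - t) * μ) :=
    fun i => by rw [div_sub_one hμ'.ne', div_left_inj' hμ'.ne']; linear_combination hstep i
  simp only [hterm]
  calc √(∑ i, (h i * f i / ((1 - t) * μ)) ^ 2) ≤ ∑ i, |h i * f i / ((1 - t) * μ)| :=
        Real.sqrt_sum_sq_le_sum_abs _ _
    _ = (∑ i, |h i * f i|) / ((1 - t) * μ) := by simp only [abs_div, abs_of_pos hμ', sum_div]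
    _ ≤ 4 * δ ^ 2 * μ ^ 2 / (2 * ((1 - δ) * μ)) / ((1 - t) * μ) := by gcongr
    _ = 2 * δ ^ 2 / ((1 - δ) * (1 - t)) := by field_simp; ring
    _ ≤ δ := by
      rw [div_le_iff₀ (mul_pos (by linarith) (by linarith))]
      -- `2 δ ≤ 1/3 < (5/6)² ≤ (1 - δ)(1 - t)`
      nlinarith [mul_le_mul_of_nonneg_left (show 1 - δ ≤ 1 - t by linarith) hδ0]

end InteriorPoint

theorem karrenbauer_contraction_general {n : ℕ} (hn : 1 ≤ n)
    (x s h f : Fin n → ℝ) (μ δ : ℝ)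
    (hμ : 0 < μ)
    (hδ : δ ≤ 1 / 6)
    (hσ : Real.sqrt (∑ i, (x i * s i / μ - 1) ^ 2) ≤ δ)
    (hstep : ∀ i, x i * f i + s i * h i =
      (1 - δ / Real.sqrt n) * μ - x i * s i)
    (horth : ∑ i, h i * f i = 0) :
    Real.sqrt (∑ i,
      ((x i + h i) * (s i + f i) / ((1 - δ / Real.sqrt n) * μ) - 1) ^ 2) ≤ δ := by
  have hδ0 : 0 ≤ δ := (Real.sqrt_nonneg _).trans hσ
  have hsqrt : 1 ≤ √(n : ℝ) := Real.one_le_sqrt.mpr (by exact_mod_cast hn)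
  refine InteriorPoint.contraction_of_step hμ hδ (div_le_self hδ0 hsqrt) ?_ hσ hstep horth
  rw [Fintype.card_fin, div_pow, Real.sq_sqrt n.cast_nonneg, mul_div_cancel₀]
  exact_mod_cast (by omega : n ≠ 0)

theorem karrenbauer_contraction {n : ℕ} (hn : 1 ≤ n)
    (x s h f : Fin n → ℝ) (μ δ : ℝ)
    (hx : ∀ i, 0 < x i) (hs : ∀ i, 0 < s i) (hμ : 0 < μ)
    (hδ0 : 0 < δ) (hδ : δ ≤ 1 / 6)
    (hσ : Real.sqrt (∑ i, (x i * s i / μ - 1) ^ 2) ≤ δ)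
    (hstep : ∀ i, x i * f i + s i * h i =
      (1 - δ / Real.sqrt n) * μ - x i * s i)
    (horth : ∑ i, h i * f i = 0) :
    Real.sqrt (∑ i,
      ((x i + h i) * (s i + f i) / ((1 - δ / Real.sqrt n) * μ) - 1) ^ 2) ≤ δ :=
  karrenbauer_contraction_general hn x s h f μ δ hμ hδ hσ hstep horth
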